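/- arXiv:2412.20908 — 3 statements merged into one kernel-verified Lean document; each statement's English description precedes it below -/
import Mathlib

section
/- Let ω ⊂ Ω_{C°} be a nonempty compact set and f a positive continuous function on ω. Then the Wulff shape [f] = C ∩ ⋂_{v∈ω} {x : ⟨x,v⟩ ≤ −f(v)} is a C-pseudo-cone; moreover 0 ∉ [f] and the recession cone of [f] equals C. -/
open MeasureTheory Metric Set Filter
open scoped RealInnerProductSpace ENNReal Topology

/-- The standard Gaussian measure on `ℝⁿ`. -/
noncomputable def gaussMeasure (n : ℕ) : Measure (EuclideanSpace ℝ (Fin n)) :=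
  volume.withDensity fun x =>
    ENNReal.ofReal ((2 * Real.pi) ^ (-(n : ℝ) / 2) * Real.exp (-‖x‖ ^ 2 / 2))

/-- The polar cone of a set `C`. -/
def polarCone {n : ℕ} (C : Set (EuclideanSpace ℝ (Fin n))) : Set (EuclideanSpace ℝ (Fin n)) :=
  {x | ∀ y ∈ C, ⟪x, y⟫ ≤ 0}

/-- A pointed, `n`-dimensional (nonempty interior) closed convex cone. -/
def IsPointedClosedConvexCone {n : ℕ} (C : Set (EuclideanSpace ℝ (Fin n))) : Prop :=
  IsClosed C ∧ Convex ℝ C ∧ (∀ x ∈ C, ∀ l : ℝ, 0 ≤ l → l • x ∈ C) ∧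
    C ∩ (-C) = {0} ∧ (interior C).Nonempty

/-- `E` is a `C`-pseudo-cone: a nonempty closed convex subset of `C` not containing the
origin, closed under dilations by `λ ≥ 1`, whose recession cone equals `C`. -/
def IsPseudoCone {n : ℕ} (C E : Set (EuclideanSpace ℝ (Fin n))) : Prop :=
  E.Nonempty ∧ IsClosed E ∧ Convex ℝ E ∧ E ⊆ C ∧ (0 : EuclideanSpace ℝ (Fin n)) ∉ E ∧
    (∀ x ∈ E, ∀ l : ℝ, 1 ≤ l → l • x ∈ E) ∧ {x | ∀ y ∈ E, y + x ∈ E} = C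

/-- The support function `h_E`. -/
noncomputable def suppFn {n : ℕ} (E : Set (EuclideanSpace ℝ (Fin n)))
    (v : EuclideanSpace ℝ (Fin n)) : ℝ :=
  sSup ((fun x => ⟪x, v⟫) '' E)

/-- The Wulff shape of a function `f` on `ω`, relative to the cone `C`. -/
def wulff {n : ℕ} (C ω : Set (EuclideanSpace ℝ (Fin n)))
    (f : EuclideanSpace ℝ (Fin n) → ℝ) : Set (EuclideanSpace ℝ (Fin n)) :=
  C ∩ ⋂ v ∈ ω, {x | ⟪x, v⟫ ≤ -f v}

/-- `Ω_{C°} = int C° ∩ 𝕊^{n-1}`, the spherical image of the interior of the polar cone. -/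
def omegaPolar {n : ℕ} (C : Set (EuclideanSpace ℝ (Fin n))) : Set (EuclideanSpace ℝ (Fin n)) :=
  interior (polarCone C) ∩ sphere 0 1

/-!
The Wulff shape is `C` cut by closed half-spaces, which gives closedness, convexity, stability
under `λ ≥ 1` and `0 ∉ [f]` at once. For an interior point `x₀` of `C`, `⟪x₀, ·⟫` is negative on
`ω ⊆ int C°`, hence `≤ -c < 0` by compactness, while `f` is bounded above, so a large multiple of
`x₀` lies in `[f]`. Since `ω ⊆ C°`, adding a vector of `C` only decreases every `⟪·, v⟫`, so
`C ⊆ rec [f]`; conversely, if `x` is a recession direction and `y ∈ [f]`, then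
`x = lim (y + k • x) / k` lies in the closed cone `C`.
-/

theorem add_mem_of_convex_of_smul_mem {V : Type*} [AddCommGroup V] [Module ℝ V] {C : Set V}
    {x y : V} (hconv : Convex ℝ C)
    (hcone : ∀ x ∈ C, ∀ l : ℝ, 0 ≤ l → l • x ∈ C) (hx : x ∈ C) (hy : y ∈ C) : x + y ∈ C := by
  have hmid : (1 / 2 : ℝ) • x + (1 / 2 : ℝ) • y ∈ C :=
    hconv hx hy (by norm_num) (by norm_num) (by norm_num)
  simpa [smul_add, smul_smul] using hcone _ hmid 2 zero_le_two

theorem mem_of_forall_add_mem_of_subset {V : Type*} [NormedAddCommGroup V] [NormedSpace ℝ V]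
    {C E : Set V} {x y : V} (hCcl : IsClosed C)
    (hcone : ∀ x ∈ C, ∀ l : ℝ, 0 ≤ l → l • x ∈ C) (hEC : E ⊆ C) (hy : y ∈ E)
    (hrec : ∀ z ∈ E, z + x ∈ E) : x ∈ C := by
  have hyk : ∀ k : ℕ, y + (k : ℝ) • x ∈ E := by
    intro k
    induction k with
    | zero => simpa using hy
    | succ k ih => simpa [add_smul, add_assoc] using hrec _ ih
  have hmem : ∀ k : ℕ, ((k : ℝ) + 1)⁻¹ • y + x ∈ C := by
    intro k
    have hk : ((k : ℝ) + 1) ≠ 0 := by positivity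
    have := hcone _ (hEC (hyk (k + 1))) ((k : ℝ) + 1)⁻¹ (by positivity)
    rwa [Nat.cast_succ, smul_add, inv_smul_smul₀ hk] at this
  have hlim : Tendsto (fun k : ℕ => ((k : ℝ) + 1)⁻¹ • y + x) atTop (𝓝 x) := by
    have h0 : Tendsto (fun k : ℕ => ((k : ℝ) + 1)⁻¹) atTop (𝓝 0) := by
      simpa using tendsto_one_div_add_atTop_nhds_zero_nat (𝕜 := ℝ)
    simpa using (h0.smul_const y).add_const x
  exact hCcl.mem_of_tendsto hlim (Eventually.of_forall hmem)

section Wulff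

variable {n : ℕ} {C ω : Set (EuclideanSpace ℝ (Fin n))} {f : EuclideanSpace ℝ (Fin n) → ℝ}
  {x v : EuclideanSpace ℝ (Fin n)}

theorem mem_wulff_iff : x ∈ wulff C ω f ↔ x ∈ C ∧ ∀ v ∈ ω, ⟪x, v⟫ ≤ -f v := by
  simp [wulff]

theorem isClosed_wulff (hC : IsClosed C) : IsClosed (wulff C ω f) :=
  hC.inter <| isClosed_biInter fun _ _ =>
    isClosed_le (continuous_id.inner continuous_const) continuous_const

theorem convex_wulff (hC : Convex ℝ C) : Convex ℝ (wulff C ω f) :=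
  hC.inter <| convex_iInter₂ fun v _ =>
    convex_halfSpace_le ⟨fun a b => inner_add_left a b v, fun r a => real_inner_smul_left a v r⟩ _

theorem zero_notMem_wulff (hω : ω.Nonempty) (hf : ∀ v ∈ ω, 0 < f v) : (0 : _) ∉ wulff C ω f := by
  intro h0
  obtain ⟨v, hv⟩ := hω
  have := (mem_wulff_iff.1 h0).2 v hv
  rw [inner_zero_left] at this
  linarith [hf v hv]

theorem smul_mem_wulff (hcone : ∀ x ∈ C, ∀ l : ℝ, 0 ≤ l → l • x ∈ C)
    (hf : ∀ v ∈ ω, 0 < f v) (hx : x ∈ wulff C ω f) {l : ℝ} (hl : 1 ≤ l) :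
    l • x ∈ wulff C ω f := by
  obtain ⟨hxC, hxω⟩ := mem_wulff_iff.1 hx
  refine mem_wulff_iff.2 ⟨hcone x hxC l (by linarith), fun v hv => ?_⟩
  rw [real_inner_smul_left]
  nlinarith [hxω v hv, hf v hv]

theorem inner_neg_of_mem_interior_of_mem_polarCone (hx : x ∈ interior C)
    (hv : v ∈ polarCone C) (hv0 : v ≠ 0) : ⟪x, v⟫ < 0 := by
  obtain ⟨ε, hε, hball⟩ := Metric.isOpen_iff.1 isOpen_interior x hx
  have hvn : 0 < ‖v‖ := norm_pos_iff.2 hv0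
  set δ : ℝ := ε / 2 / ‖v‖
  have hmem : x + δ • v ∈ C := by
    refine interior_subset (hball ?_)
    rw [mem_ball, dist_eq_norm, add_sub_cancel_left, norm_smul, Real.norm_of_nonneg (by positivity),
      div_mul_cancel₀ _ hvn.ne']
    linarith
  have := hv _ hmem
  rw [inner_add_right, real_inner_smul_right, real_inner_self_eq_norm_sq, real_inner_comm] at this
  nlinarith [mul_pos (show 0 < δ by positivity) (pow_pos hvn 2)]

theorem exists_pos_forall_inner_le_neg (hx : x ∈ interior C) (hω : ω.Nonempty)
    (hωc : IsCompact ω) (hωΩ : ω ⊆ omegaPolar C) : ∃ c > 0, ∀ v ∈ ω, ⟪x, v⟫ ≤ -c := by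
  obtain ⟨v₁, hv₁, hmax⟩ :=
    hωc.exists_isMaxOn hω (continuous_const.inner continuous_id (𝕜 := ℝ)).continuousOn
  have hv₁0 : v₁ ≠ 0 := ne_zero_of_mem_unit_sphere ⟨v₁, (hωΩ hv₁).2⟩
  refine ⟨-⟪x, v₁⟫, ?_, fun v hv => by simpa using hmax hv⟩
  linarith [inner_neg_of_mem_interior_of_mem_polarCone hx (interior_subset (hωΩ hv₁).1) hv₁0]

theorem wulff_nonempty (hcone : ∀ x ∈ C, ∀ l : ℝ, 0 ≤ l → l • x ∈ C) (hx : x ∈ interior C)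
    (hω : ω.Nonempty) (hωc : IsCompact ω) (hωΩ : ω ⊆ omegaPolar C) (hf : ContinuousOn f ω) :
    (wulff C ω f).Nonempty := by
  obtain ⟨c, hc, hxω⟩ := exists_pos_forall_inner_le_neg hx hω hωc hωΩ
  obtain ⟨M, hM⟩ := hωc.bddAbove_image hf
  set t := max M 0 / c
  have ht : t * c = max M 0 := div_mul_cancel₀ _ hc.ne'
  refine ⟨t • x, mem_wulff_iff.2 ⟨hcone x (interior_subset hx) t (by positivity), fun v hv => ?_⟩⟩
  have hfv : f v ≤ M := hM (mem_image_of_mem f hv)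
  rw [real_inner_smul_left]
  nlinarith [mul_le_mul_of_nonneg_left (hxω v hv) (show 0 ≤ t by positivity), le_max_left M 0]

theorem add_mem_wulff (hconv : Convex ℝ C) (hcone : ∀ x ∈ C, ∀ l : ℝ, 0 ≤ l → l • x ∈ C)
    (hωC : ω ⊆ polarCone C) {y : EuclideanSpace ℝ (Fin n)} (hy : y ∈ wulff C ω f)
    (hx : x ∈ C) : y + x ∈ wulff C ω f := by
  obtain ⟨hyC, hyω⟩ := mem_wulff_iff.1 hy
  refine mem_wulff_iff.2 ⟨add_mem_of_convex_of_smul_mem hconv hcone hyC hx, fun v hv => ?_⟩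
  have hvx : ⟪x, v⟫ ≤ 0 := real_inner_comm x v ▸ hωC hv x hx
  rw [inner_add_left]
  linarith [hyω v hv]

end Wulff

theorem stmt_12_general {n : ℕ} (C : Set (EuclideanSpace ℝ (Fin n)))
    (hC : IsPointedClosedConvexCone C)
    (ω : Set (EuclideanSpace ℝ (Fin n))) (hω : ω.Nonempty) (hωc : IsCompact ω)
    (hωΩ : ω ⊆ omegaPolar C)
    (f : EuclideanSpace ℝ (Fin n) → ℝ) (hf : ContinuousOn f ω) (hfpos : ∀ v ∈ ω, 0 < f v) :
    IsPseudoCone C (wulff C ω f) := by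
  obtain ⟨hCcl, hCconv, hcone, -, x₀, hx₀⟩ := hC
  have hωC : ω ⊆ polarCone C := fun v hv => interior_subset (hωΩ hv).1
  have hne := wulff_nonempty hcone hx₀ hω hωc hωΩ hf
  refine ⟨hne, isClosed_wulff hCcl, convex_wulff hCconv, inter_subset_left,
    zero_notMem_wulff hω hfpos, fun x hx l hl => smul_mem_wulff hcone hfpos hx hl, ?_⟩
  ext x
  obtain ⟨y, hy⟩ := hne
  exact ⟨fun hrec => mem_of_forall_add_mem_of_subset hCcl hcone inter_subset_left hy hrec,
    fun hx _ hz => add_mem_wulff hCconv hcone hωC hz hx⟩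

theorem stmt_12 {n : ℕ} (hn : 2 ≤ n) (C : Set (EuclideanSpace ℝ (Fin n)))
    (hC : IsPointedClosedConvexCone C)
    (ω : Set (EuclideanSpace ℝ (Fin n))) (hω : ω.Nonempty) (hωc : IsCompact ω)
    (hωΩ : ω ⊆ omegaPolar C)
    (f : EuclideanSpace ℝ (Fin n) → ℝ) (hf : ContinuousOn f ω) (hfpos : ∀ v ∈ ω, 0 < f v) :
    IsPseudoCone C (wulff C ω f) :=
  stmt_12_general C hC ω hω hωc hωΩ f hf hfpos
end

section
/- Let ω ⊂ Ω_{C°} be nonempty compact, μ a nonzero finite Borel measure on ω, and α > 1/n. Then F(δ) = δ μ(ω) − (1/α) γₙ(C \ [δ])^α > 0 for all sufficiently small constant functions δ > 0, where [δ] denotes the Wulff shape of the constant function δ on ω. -/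
open MeasureTheory Metric Set Filter
open scoped RealInnerProductSpace ENNReal Topology

-- density bound
lemma gauss_ball_le (n : ℕ) (r : ℝ) :
    gaussMeasure n (ball (0 : EuclideanSpace ℝ (Fin n)) r) ≤
      ENNReal.ofReal ((2 * Real.pi) ^ (-(n : ℝ) / 2)) *
        volume (ball (0 : EuclideanSpace ℝ (Fin n)) r) := by
  rw [gaussMeasure, withDensity_apply _ measurableSet_ball]
  calc ∫⁻ x in ball (0 : EuclideanSpace ℝ (Fin n)) r,
        ENNReal.ofReal ((2 * Real.pi) ^ (-(n : ℝ) / 2) * Real.exp (-‖x‖ ^ 2 / 2))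
      ≤ ∫⁻ _x in ball (0 : EuclideanSpace ℝ (Fin n)) r,
        ENNReal.ofReal ((2 * Real.pi) ^ (-(n : ℝ) / 2)) := by
        refine lintegral_mono fun x => ENNReal.ofReal_le_ofReal ?_
        have h1 : Real.exp (-‖x‖ ^ 2 / 2) ≤ 1 := by
          rw [Real.exp_le_one_iff]
          nlinarith [sq_nonneg ‖x‖]
        have h2 : (0:ℝ) ≤ (2 * Real.pi) ^ (-(n : ℝ) / 2) :=
          Real.rpow_nonneg (by positivity) _
        nlinarith
    _ = ENNReal.ofReal ((2 * Real.pi) ^ (-(n : ℝ) / 2)) *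
        volume (ball (0 : EuclideanSpace ℝ (Fin n)) r) := by
        rw [setLIntegral_const]

lemma incl_ball {n : ℕ} (C ω : Set (EuclideanSpace ℝ (Fin n))) {ε δ : ℝ}
    (hε : 0 < ε) (hδ : 0 < δ)
    (hball : ∀ v ∈ ω, ball v ε ⊆ polarCone C) :
    C \ wulff C ω (fun _ => δ) ⊆ ball 0 (2 * δ / ε) := by
  intro x hx
  obtain ⟨hxC, hxw⟩ := hx
  have : ∃ v ∈ ω, ¬ (⟪x, v⟫ ≤ -δ) := by
    by_contra h
    push_neg at h
    exact hxw ⟨hxC, by simpa [Set.mem_iInter] using h⟩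
  obtain ⟨v, hv, hlt⟩ := this
  push_neg at hlt
  rcases eq_or_ne x 0 with rfl | hx0
  · simpa using by positivity
  · have hxn : (0:ℝ) < ‖x‖ := norm_pos_iff.mpr hx0
    set u : EuclideanSpace ℝ (Fin n) := ‖x‖⁻¹ • x with hu
    have hun : ‖u‖ = 1 := by
      rw [hu, norm_smul, norm_inv, norm_norm, inv_mul_cancel₀ hxn.ne']
    have hw : v + (ε/2) • u ∈ ball v ε := by
      rw [mem_ball, dist_eq_norm]
      simp only [add_sub_cancel_left, norm_smul, hun, mul_one]
      rw [Real.norm_eq_abs, abs_of_pos (by positivity)]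
      linarith
    have hpol := hball v hv hw x hxC
    have hiu : ⟪u, x⟫ = ‖x‖ := by
      rw [hu, real_inner_smul_left, real_inner_self_eq_norm_sq]
      field_simp
    rw [inner_add_left, real_inner_smul_left, hiu] at hpol
    have hvx : ⟪v, x⟫ = ⟪x, v⟫ := real_inner_comm x v
    rw [hvx] at hpol
    rw [mem_ball, dist_zero_right]
    have : ε / 2 * ‖x‖ < δ := by linarith
    rw [lt_div_iff₀ hε]
    nlinarith

theorem stmt_16 {n : ℕ} (hn : 2 ≤ n) (C : Set (EuclideanSpace ℝ (Fin n)))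
    (hC : IsPointedClosedConvexCone C)
    (ω : Set (EuclideanSpace ℝ (Fin n))) (hω : ω.Nonempty) (hωc : IsCompact ω)
    (hωΩ : ω ⊆ omegaPolar C)
    (μ : Measure (EuclideanSpace ℝ (Fin n))) [IsFiniteMeasure μ] (hμ : μ ω ≠ 0)
    (α : ℝ) (hα : 1 / n < α) :
    ∃ δ₀ : ℝ, 0 < δ₀ ∧ ∀ δ : ℝ, 0 < δ → δ < δ₀ →
      0 < δ * (μ ω).toReal -
        (1 / α) * (gaussMeasure n (C \ wulff C ω (fun _ => δ))).toReal ^ α := by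
  have hn0 : (0:ℝ) < n := by positivity
  have hαpos : 0 < α := lt_trans (by positivity : (0:ℝ) < 1 / n) hα
  have hnα : 1 < (n:ℝ) * α := by
    rw [div_lt_iff₀ hn0] at hα
    nlinarith
  have hp : 0 < (n:ℝ) * α - 1 := by linarith
  -- uniform ε
  obtain ⟨ε, hε, hth⟩ := hωc.exists_thickening_subset_open isOpen_interior
    (fun v hv => (hωΩ hv).1)
  have hball : ∀ v ∈ ω, ball v ε ⊆ polarCone C := by
    intro v hv w hw
    have : w ∈ thickening ε ω := by
      rw [mem_thickening_iff]
      exact ⟨v, hv, hw⟩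
    exact interior_subset (hth this)
  set c := (μ ω).toReal with hc_def
  have hc : 0 < c := ENNReal.toReal_pos hμ (measure_ne_top μ ω)
  set Cg : ℝ := (2 * Real.pi) ^ (-(n : ℝ) / 2) with hCg
  have hCg0 : 0 ≤ Cg := Real.rpow_nonneg (by positivity) _
  set B : ℝ := (volume (ball (0 : EuclideanSpace ℝ (Fin n)) 1)).toReal with hB
  have hB0 : 0 ≤ B := ENNReal.toReal_nonneg
  set K : ℝ := Cg * B * (2 / ε) ^ n with hK
  have hK0 : 0 ≤ K := by positivity
  -- gaussian measure bound
  have bound : ∀ δ : ℝ, 0 < δ →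
      (gaussMeasure n (C \ wulff C ω (fun _ => δ))).toReal ≤ K * δ ^ n := by
    intro δ hδ
    have hr : 0 < 2 * δ / ε := by positivity
    have h1 : gaussMeasure n (C \ wulff C ω (fun _ => δ)) ≤
        ENNReal.ofReal Cg * volume (ball (0 : EuclideanSpace ℝ (Fin n)) (2 * δ / ε)) :=
      le_trans (measure_mono (incl_ball C ω hε hδ hball)) (gauss_ball_le n _)
    have h2 : volume (ball (0 : EuclideanSpace ℝ (Fin n)) (2 * δ / ε)) =
        ENNReal.ofReal ((2 * δ / ε) ^ n) * volume (ball (0 : EuclideanSpace ℝ (Fin n)) 1) := by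
      rw [Measure.addHaar_ball_of_pos volume _ hr, finrank_euclideanSpace, Fintype.card_fin]
    rw [h2] at h1
    have hfin : ENNReal.ofReal Cg * (ENNReal.ofReal ((2 * δ / ε) ^ n) *
        volume (ball (0 : EuclideanSpace ℝ (Fin n)) 1)) ≠ ∞ :=
      ENNReal.mul_ne_top ENNReal.ofReal_ne_top
        (ENNReal.mul_ne_top ENNReal.ofReal_ne_top measure_ball_lt_top.ne)
    have h3 := ENNReal.toReal_mono hfin h1
    rw [ENNReal.toReal_mul, ENNReal.toReal_mul, ENNReal.toReal_ofReal hCg0,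
      ENNReal.toReal_ofReal (by positivity)] at h3
    calc (gaussMeasure n (C \ wulff C ω (fun _ => δ))).toReal
        ≤ Cg * ((2 * δ / ε) ^ n * B) := h3
      _ = K * δ ^ n := by
          rw [hK]
          have : (2 * δ / ε) ^ n = (2 / ε) ^ n * δ ^ n := by
            rw [← mul_pow]; ring_nf
          rw [this]; ring
  -- eventual smallness
  have cont : Tendsto (fun δ : ℝ => (1 / α) * K ^ α * δ ^ ((n:ℝ) * α - 1))
      (𝓝[>] (0:ℝ)) (𝓝 0) := by
    have h1 : ContinuousAt (fun δ : ℝ => δ ^ ((n:ℝ) * α - 1)) 0 :=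
      Real.continuousAt_rpow_const 0 _ (Or.inr hp.le)
    have h2 := h1.tendsto.mono_left (nhdsWithin_le_nhds (s := Set.Ioi (0:ℝ)))
    rw [Real.zero_rpow hp.ne'] at h2
    simpa using h2.const_mul ((1 / α) * K ^ α)
  have hev : ∀ᶠ δ in 𝓝[>] (0:ℝ), (1 / α) * K ^ α * δ ^ ((n:ℝ) * α - 1) < c :=
    cont.eventually_lt_const hc
  rw [eventually_nhdsWithin_iff, Metric.eventually_nhds_iff] at hev
  obtain ⟨δ₀, hδ₀, hsm⟩ := hev
  refine ⟨δ₀, hδ₀, fun δ hδ hδlt => ?_⟩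
  have hsmall : (1 / α) * K ^ α * δ ^ ((n:ℝ) * α - 1) < c := by
    apply hsm
    · rw [Real.dist_eq, sub_zero, abs_of_pos hδ]; exact hδlt
    · exact hδ
  have hb := bound δ hδ
  have hm0 : (0:ℝ) ≤ (gaussMeasure n (C \ wulff C ω (fun _ => δ))).toReal :=
    ENNReal.toReal_nonneg
  have hrpow : (gaussMeasure n (C \ wulff C ω (fun _ => δ))).toReal ^ α ≤
      (K * δ ^ n) ^ α := Real.rpow_le_rpow hm0 hb hαpos.le
  have heq : (K * δ ^ n) ^ α = K ^ α * (δ ^ ((n:ℝ) * α - 1) * δ) := by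
    rw [Real.mul_rpow hK0 (by positivity)]
    congr 1
    rw [← Real.rpow_natCast δ n, ← Real.rpow_mul hδ.le]
    have h := Real.rpow_add hδ ((n:ℝ) * α - 1) 1
    rw [Real.rpow_one] at h
    rw [← h]
    congr 1
    ring
  rw [heq] at hrpow
  have hδp : 0 ≤ δ ^ ((n:ℝ) * α - 1) := Real.rpow_nonneg hδ.le _
  have hKα : 0 ≤ K ^ α := Real.rpow_nonneg hK0 _
  have h1α : 0 < 1 / α := by positivity
  nlinarith [mul_lt_mul_of_pos_right hsmall hδ]
end

section
/- Let E_i (i ≥ 0) be C-pseudo-cones such that E_i converges to E_0 in the sense of Schneider (i.e., E_i ∩ C⁻(t) → E_0 ∩ C⁻(t) in Hausdorff distance for all sufficiently large t, where C⁻(t) = {x ∈ C : ⟨x,𝔲⟩ ≤ t}). Then the Gaussian co-volumes converge: γₙ(C \ E_i) → γₙ(C \ E_0). -/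
open MeasureTheory Metric Set Filter
open scoped RealInnerProductSpace ENNReal Topology

/-- Separation of a point from a nonempty closed convex set by a unit vector. -/
lemma aux_sep {n : ℕ} {K : Set (EuclideanSpace ℝ (Fin n))} (hKc : IsClosed K) (hK : Convex ℝ K)
    (hne : K.Nonempty) {x : EuclideanSpace ℝ (Fin n)} (hx : x ∉ K) :
    ∃ v : EuclideanSpace ℝ (Fin n), ‖v‖ = 1 ∧ ∀ y ∈ K, ⟪v, y⟫ ≤ ⟪v, x⟫ := by
  obtain ⟨p, hpK, hp⟩ := exists_norm_eq_iInf_of_complete_convex hne hKc.isComplete hK x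
  rw [norm_eq_iInf_iff_real_inner_le_zero hK hpK] at hp
  have hxp : x - p ≠ 0 := sub_ne_zero.2 fun h => hx (h ▸ hpK)
  have hnorm : ‖x - p‖ ≠ 0 := norm_ne_zero_iff.2 hxp
  refine ⟨‖x - p‖⁻¹ • (x - p), by simp [norm_smul, inv_mul_cancel₀ hnorm], fun y hy => ?_⟩
  have h1 : ⟪x - p, y⟫ - ⟪x - p, p⟫ ≤ 0 := by rw [← inner_sub_right]; exact hp y hy
  have h2 : 0 ≤ ⟪x - p, x⟫ - ⟪x - p, p⟫ := by
    rw [← inner_sub_right]; exact real_inner_self_nonneg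
  rw [real_inner_smul_left, real_inner_smul_left]
  have : ⟪x - p, y⟫ ≤ ⟪x - p, x⟫ := by linarith
  exact mul_le_mul_of_nonneg_left this (inv_nonneg.2 (norm_nonneg _))

/-- The Gaussian measure is finite. -/
lemma aux_gauss_finite (n : ℕ) : gaussMeasure n Set.univ ≠ ⊤ := by
  have hInt : Integrable (fun x : EuclideanSpace ℝ (Fin n) =>
      (2 * Real.pi) ^ (-(n : ℝ) / 2) * Real.exp (-‖x‖ ^ 2 / 2)) := by
    apply Integrable.const_mul
    have h := (GaussianFourier.integrable_cexp_neg_mul_sq_norm_add (V := EuclideanSpace ℝ (Fin n))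
      (b := (1/2 : ℂ)) (by norm_num) 0 0).norm
    refine h.congr (Eventually.of_forall fun v => ?_)
    simp [Complex.norm_exp, neg_div, ← Complex.ofReal_pow]
    ring_nf
  rw [gaussMeasure, withDensity_apply _ MeasurableSet.univ, Measure.restrict_univ]
  exact hInt.lintegral_lt_top.ne

/-- Lebesgue-null sets are `gaussMeasure`-null. -/
lemma aux_gauss_null {n : ℕ} {s : Set (EuclideanSpace ℝ (Fin n))} (hm : MeasurableSet s)
    (hs : volume s = 0) : gaussMeasure n s = 0 := by
  rw [gaussMeasure, withDensity_apply _ hm, Measure.restrict_eq_zero.2 hs, lintegral_zero_measure]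

theorem stmt_17 {n : ℕ} (hn : 2 ≤ n) (C : Set (EuclideanSpace ℝ (Fin n)))
    (hC : IsPointedClosedConvexCone C)
    (u : EuclideanSpace ℝ (Fin n)) (hu : ‖u‖ = 1)
    (huC : u ∈ interior C) (hu' : -u ∈ interior (polarCone C))
    (E : ℕ → Set (EuclideanSpace ℝ (Fin n))) (E₀ : Set (EuclideanSpace ℝ (Fin n)))
    (hE : ∀ i, IsPseudoCone C (E i)) (hE₀ : IsPseudoCone C E₀)
    (hconv : ∃ t₀ : ℝ, 0 < t₀ ∧
      (∀ i, (E i ∩ {x ∈ C | ⟪x, u⟫ ≤ t₀}).Nonempty) ∧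
      (E₀ ∩ {x ∈ C | ⟪x, u⟫ ≤ t₀}).Nonempty ∧
      ∀ t : ℝ, t₀ ≤ t →
        Tendsto (fun i => hausdorffDist (E i ∩ {x ∈ C | ⟪x, u⟫ ≤ t})
          (E₀ ∩ {x ∈ C | ⟪x, u⟫ ≤ t})) atTop (nhds 0)) :
    Tendsto (fun i => gaussMeasure n (C \ E i)) atTop (nhds (gaussMeasure n (C \ E₀))) := by
  obtain ⟨t₀, ht₀, hne, hne₀, hH⟩ := hconv
  -- bounded slices
  obtain ⟨r, hr, hball⟩ : ∃ r > 0, ball (-u) r ⊆ polarCone C :=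
    Metric.mem_nhds_iff.1 (mem_interior_iff_mem_nhds.1 hu')
  have hbound : ∀ t : ℝ, ∀ x ∈ C, ⟪x, u⟫ ≤ t → ‖x‖ ≤ 2 / r * t := by
    intro t x hx hxt
    rcases eq_or_ne x 0 with rfl | hx0
    · have h0 : (0:ℝ) ≤ t := by simpa using hxt
      simp only [norm_zero]
      positivity
    · have hxn : ‖x‖ ≠ 0 := norm_ne_zero_iff.2 hx0
      have hw : -u + (r/2) • (‖x‖⁻¹ • x) ∈ polarCone C := by
        apply hball
        rw [mem_ball, dist_eq_norm, add_sub_cancel_left, norm_smul, norm_smul]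
        simp only [Real.norm_eq_abs, abs_of_pos (half_pos hr), abs_of_nonneg
          (inv_nonneg.2 (norm_nonneg x))]
        rw [inv_mul_cancel₀ hxn, mul_one]
        linarith
      have h1 := hw x hx
      rw [inner_add_left, inner_neg_left, real_inner_smul_left, real_inner_smul_left,
        real_inner_self_eq_norm_sq] at h1
      have h2 : ⟪u, x⟫ = ⟪x, u⟫ := real_inner_comm x u
      have h3 : ‖x‖⁻¹ * ‖x‖ ^ 2 = ‖x‖ := by field_simp
      rw [h3] at h1
      rw [h2] at h1
      have : r / 2 * ‖x‖ ≤ t := by linarith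
      rw [div_mul_eq_mul_div, le_div_iff₀ hr] at *
      nlinarith
  have hBdd : ∀ t : ℝ, Bornology.IsBounded {x ∈ C | ⟪x, u⟫ ≤ t} := by
    intro t
    apply (isBounded_closedBall (x := (0 : EuclideanSpace ℝ (Fin n))) (r := 2 / r * t)).subset
    intro x hx
    rw [mem_closedBall_zero_iff]
    exact hbound t x hx.1 hx.2
  -- nonemptiness and finite Hausdorff edistance of slices
  have hsub : ∀ {s t : ℝ}, s ≤ t →
      {x ∈ C | ⟪x, u⟫ ≤ s} ⊆ {x ∈ C | ⟪x, u⟫ ≤ t} := by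
    intro s t hst x hx
    exact ⟨hx.1, hx.2.trans hst⟩
  have hneT : ∀ t, t₀ ≤ t → ∀ i, (E i ∩ {x ∈ C | ⟪x, u⟫ ≤ t}).Nonempty := fun t ht i =>
    (hne i).mono (inter_subset_inter_right _ (hsub ht))
  have hne₀T : ∀ t, t₀ ≤ t → (E₀ ∩ {x ∈ C | ⟪x, u⟫ ≤ t}).Nonempty := fun t ht =>
    hne₀.mono (inter_subset_inter_right _ (hsub ht))
  have hedist : ∀ t, t₀ ≤ t → ∀ i,
      EMetric.hausdorffEdist (E i ∩ {x ∈ C | ⟪x, u⟫ ≤ t}) (E₀ ∩ {x ∈ C | ⟪x, u⟫ ≤ t}) ≠ ⊤ := by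
    intro t ht i
    exact hausdorffEdist_ne_top_of_nonempty_of_bounded (hneT t ht i) (hne₀T t ht)
      (((hBdd t).subset inter_subset_right)) (((hBdd t).subset inter_subset_right))
  -- a.e. convergence of indicators
  have hnullL : volume (frontier E₀) = 0 := hE₀.2.2.1.addHaar_frontier volume
  have hnull : gaussMeasure n (frontier E₀) = 0 :=
    aux_gauss_null isClosed_frontier.measurableSet hnullL
  have h_ae : ∀ᵐ x ∂(gaussMeasure n), x ∉ frontier E₀ := by
    rw [ae_iff]; simpa using hnull
  have h_lim : ∀ᵐ x ∂(gaussMeasure n), ∀ᶠ i in atTop, (x ∈ C \ E i ↔ x ∈ C \ E₀) := by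
    filter_upwards [h_ae] with x hxf
    by_cases hxC : x ∈ C
    · by_cases hxE : x ∈ E₀
      · -- x is in the interior of E₀; show eventually x ∈ E i
        have hxint : x ∈ interior E₀ := by
          have hmem : x ∈ interior E₀ ∪ frontier E₀ := by
            rw [← closure_eq_interior_union_frontier, hE₀.2.1.closure_eq]; exact hxE
          rcases hmem with h | h
          · exact h
          · exact absurd h hxf
        obtain ⟨ε, hε, hballε⟩ : ∃ ε > 0, ball x ε ⊆ E₀ :=
          Metric.mem_nhds_iff.1 (mem_interior_iff_mem_nhds.1 hxint)
        set t : ℝ := max t₀ (⟪x, u⟫ + ε) with ht_def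
        have ht : t₀ ≤ t := le_max_left _ _
        have hev := (hH t ht).eventually (eventually_lt_nhds (show (0:ℝ) < ε/4 by linarith))
        filter_upwards [hev] with i hi
        have hxEi : x ∈ E i := by
          by_contra hxEi
          obtain ⟨v, hv, hsep⟩ := aux_sep (hE i).2.1 (hE i).2.2.1 (hE i).1 hxEi
          set z := x + (ε/2) • v with hz_def
          have hzball : z ∈ ball x ε := by
            rw [mem_ball, dist_eq_norm, add_sub_cancel_left, norm_smul, Real.norm_eq_abs,
              abs_of_pos (half_pos hε), hv, mul_one]
            linarith
          have hzE₀ : z ∈ E₀ := hballε hzball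
          have hzC : z ∈ C := hE₀.2.2.2.1 hzE₀
          have hzu : ⟪z, u⟫ ≤ t := by
            have hcs : ⟪v, u⟫ ≤ 1 := by
              calc ⟪v, u⟫ ≤ ‖v‖ * ‖u‖ := real_inner_le_norm v u
              _ = 1 := by rw [hv, hu, mul_one]
            rw [hz_def, inner_add_left, real_inner_smul_left]
            have : ⟪x, u⟫ + ε / 2 * ⟪v, u⟫ ≤ ⟪x, u⟫ + ε := by nlinarith
            exact this.trans (le_max_right _ _)
          have hzmem : z ∈ E₀ ∩ {x ∈ C | ⟪x, u⟫ ≤ t} := ⟨hzE₀, hzC, hzu⟩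
          have hdc : hausdorffDist (E₀ ∩ {x ∈ C | ⟪x, u⟫ ≤ t})
              (E i ∩ {x ∈ C | ⟪x, u⟫ ≤ t}) < ε/4 := by
            rwa [hausdorffDist_comm]
          obtain ⟨w, hw, hwd⟩ := exists_dist_lt_of_hausdorffDist_lt hzmem hdc
            (by rw [EMetric.hausdorffEdist_comm]; exact hedist t ht i)
          have hsep' := hsep w hw.1
          have hinner : ⟪v, z⟫ = ⟪v, x⟫ + ε/2 := by
            rw [hz_def, inner_add_right, real_inner_smul_right, real_inner_self_eq_norm_sq, hv]
            ring
          have hzw : ⟪v, z - w⟫ ≤ ‖v‖ * ‖z - w‖ := real_inner_le_norm v (z - w)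
          rw [hv, one_mul] at hzw
          have hnzw : ‖z - w‖ < ε/4 := by rwa [← dist_eq_norm]
          rw [inner_sub_right] at hzw
          rw [hinner] at hzw
          linarith
        simp [hxEi, hxE]
      · -- x ∉ E₀; show eventually x ∉ E i
        have hxcl : x ∉ E₀ := hxE
        have hd : 0 < infDist x E₀ :=
          (hE₀.2.1.notMem_iff_infDist_pos hE₀.1).1 hxcl
        set t : ℝ := max t₀ ⟪x, u⟫ with ht_def
        have ht : t₀ ≤ t := le_max_left _ _
        have hev := (hH t ht).eventually (eventually_lt_nhds hd)
        filter_upwards [hev] with i hi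
        have hxEi : x ∉ E i := by
          intro hxEi
          have hxmem : x ∈ E i ∩ {y ∈ C | ⟪y, u⟫ ≤ t} := ⟨hxEi, hxC, le_max_right _ _⟩
          have h1 : infDist x (E₀ ∩ {y ∈ C | ⟪y, u⟫ ≤ t}) ≤
              hausdorffDist (E i ∩ {y ∈ C | ⟪y, u⟫ ≤ t}) (E₀ ∩ {y ∈ C | ⟪y, u⟫ ≤ t}) :=
            infDist_le_hausdorffDist_of_mem hxmem (hedist t ht i)
          have h2 : infDist x E₀ ≤ infDist x (E₀ ∩ {y ∈ C | ⟪y, u⟫ ≤ t}) :=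
            infDist_le_infDist_of_subset inter_subset_left (hne₀T t ht)
          linarith
        simp [hxEi, hxE, hxC]
    · exact Eventually.of_forall fun i => by simp [hxC]
  -- conclude
  exact tendsto_measure_of_ae_tendsto_indicator atTop
    (hC.1.measurableSet.diff hE₀.2.1.measurableSet)
    (fun i => hC.1.measurableSet.diff (hE i).2.1.measurableSet)
    MeasurableSet.univ (aux_gauss_finite n)
    (Eventually.of_forall fun i => subset_univ _) h_lim
end
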